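/- For any (ā,b̄) ∈ ℝⁿ×ℝⁿ the following are equivalent: (i) the point ā² − b̄² is a local minimizer of f and min{āᵢ², b̄ᵢ²} = 0 for every i ∈ {1,…,n}; (ii) (ā,b̄) is a local minimizer of F. -/

import Mathlib

/-!
Write `x = a² − b²` and `m = min(a², b²)` coordinatewise. Since `a² = x⁺ + m` and `b² = x⁻ + m`,
`F(a, b) = f(a² − b²) + 2μ Σᵢ mᵢ`. Conversely, for fixed signs every point `x` and every excess
`e ≥ 0` lift continuously to `(±√(x⁺ + e), ±√(x⁻ + e))`, on which `F = f(x) + 2μ Σᵢ eᵢ`.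
Lifting nearby `x` with the excess of `(a, b)` kept fixed transports local minimality of `F` to
`f`; scaling the excess by `s` near `1` shows that at a local minimizer of `F` the slope
`2μ Σᵢ mᵢ` must vanish.
-/

noncomputable def signedSqrt (u s : ℝ) : ℝ := if u < 0 then -√s else √s

@[fun_prop]
lemma continuous_signedSqrt (u : ℝ) : Continuous (signedSqrt u) := by
  unfold signedSqrt
  split_ifs <;> fun_prop

lemma signedSqrt_sq (u : ℝ) {s : ℝ} (hs : 0 ≤ s) : signedSqrt u s ^ 2 = s := by
  unfold signedSqrt
  split_ifs <;> simp [Real.sq_sqrt hs]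

lemma signedSqrt_sq_self (u : ℝ) : signedSqrt u (u ^ 2) = u := by
  unfold signedSqrt
  rw [Real.sqrt_sq_eq_abs]
  split_ifs with hu
  · rw [abs_of_neg hu, neg_neg]
  · exact abs_of_nonneg (not_lt.mp hu)

section PosPart

variable {α : Type*} [AddCommGroup α] [LinearOrder α] [IsOrderedAddMonoid α]

lemma sub_posPart_add_min (a b : α) : (a - b)⁺ + min a b = a := by
  have h : min a b = a - (a - b)⁺ := inf_eq_sub_posPart_sub a b
  rw [h, add_sub_cancel]

lemma sub_negPart_add_min (a b : α) : (a - b)⁻ + min a b = b := by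
  rw [← posPart_neg, neg_sub, min_comm, sub_posPart_add_min]

end PosPart

section Hadamard

variable {ι : Type*}

def hadamardDiff (p : EuclideanSpace ℝ ι × EuclideanSpace ℝ ι) : EuclideanSpace ℝ ι :=
  WithLp.toLp 2 fun i => p.1 i ^ 2 - p.2 i ^ 2

def minSq (p : EuclideanSpace ℝ ι × EuclideanSpace ℝ ι) (i : ι) : ℝ :=
  min (p.1 i ^ 2) (p.2 i ^ 2)

noncomputable def hadamardLift (p : EuclideanSpace ℝ ι × EuclideanSpace ℝ ι)
    (x : EuclideanSpace ℝ ι) (e : ι → ℝ) : EuclideanSpace ℝ ι × EuclideanSpace ℝ ι :=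
  (WithLp.toLp 2 fun i => signedSqrt (p.1 i) ((x i)⁺ + e i),
    WithLp.toLp 2 fun i => signedSqrt (p.2 i) ((x i)⁻ + e i))

lemma minSq_nonneg (p : EuclideanSpace ℝ ι × EuclideanSpace ℝ ι) : 0 ≤ minSq p :=
  fun _ => le_min (sq_nonneg _) (sq_nonneg _)

lemma continuous_hadamardDiff :
    Continuous (hadamardDiff : EuclideanSpace ℝ ι × EuclideanSpace ℝ ι → EuclideanSpace ℝ ι) := by
  unfold hadamardDiff
  fun_prop

lemma continuous_hadamardLift (p : EuclideanSpace ℝ ι × EuclideanSpace ℝ ι) :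
    Continuous fun q : EuclideanSpace ℝ ι × (ι → ℝ) => hadamardLift p q.1 q.2 := by
  unfold hadamardLift
  have hpos : Continuous (posPart : ℝ → ℝ) := continuous_posPart
  have hneg : Continuous (negPart : ℝ → ℝ) := continuous_negPart
  fun_prop

lemma hadamardLift_hadamardDiff_minSq (p : EuclideanSpace ℝ ι × EuclideanSpace ℝ ι) :
    hadamardLift p (hadamardDiff p) (minSq p) = p := by
  ext i
  · simp [hadamardLift, hadamardDiff, minSq, sub_posPart_add_min, signedSqrt_sq_self]
  · simp [hadamardLift, hadamardDiff, minSq, sub_negPart_add_min, signedSqrt_sq_self]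

section Objectives

variable [Fintype ι]

def l1Objective (h : EuclideanSpace ℝ ι → ℝ) (μ : ℝ) (x : EuclideanSpace ℝ ι) : ℝ :=
  h x + μ * ∑ i, |x i|

def hadamardObjective (h : EuclideanSpace ℝ ι → ℝ) (μ : ℝ)
    (p : EuclideanSpace ℝ ι × EuclideanSpace ℝ ι) : ℝ :=
  h (hadamardDiff p) + μ * ∑ i, (p.1 i ^ 2 + p.2 i ^ 2)

lemma hadamardObjective_hadamardLift (h : EuclideanSpace ℝ ι → ℝ) (μ : ℝ)
    (p : EuclideanSpace ℝ ι × EuclideanSpace ℝ ι) (x : EuclideanSpace ℝ ι) {e : ι → ℝ}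
    (he : 0 ≤ e) :
    hadamardObjective h μ (hadamardLift p x e) = l1Objective h μ x + 2 * μ * ∑ i, e i := by
  have hsq₁ (i : ι) : (hadamardLift p x e).1 i ^ 2 = (x i)⁺ + e i :=
    signedSqrt_sq _ (add_nonneg (posPart_nonneg _) (he i))
  have hsq₂ (i : ι) : (hadamardLift p x e).2 i ^ 2 = (x i)⁻ + e i :=
    signedSqrt_sq _ (add_nonneg (negPart_nonneg _) (he i))
  have hdiff : hadamardDiff (hadamardLift p x e) = x := by
    ext i
    simp only [hadamardDiff, PiLp.toLp_apply, hsq₁, hsq₂]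
    rw [add_sub_add_right_eq_sub, posPart_sub_negPart]
  have hsum : ∑ i, ((hadamardLift p x e).1 i ^ 2 + (hadamardLift p x e).2 i ^ 2)
      = ∑ i, |x i| + 2 * ∑ i, e i := by
    simp only [hsq₁, hsq₂, Finset.mul_sum, ← Finset.sum_add_distrib, ← posPart_add_negPart]
    exact Finset.sum_congr rfl fun i _ => by ring
  rw [hadamardObjective, hdiff, hsum, l1Objective]
  ring

lemma hadamardObjective_eq_l1Objective_add (h : EuclideanSpace ℝ ι → ℝ) (μ : ℝ)
    (p : EuclideanSpace ℝ ι × EuclideanSpace ℝ ι) :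
    hadamardObjective h μ p = l1Objective h μ (hadamardDiff p) + 2 * μ * ∑ i, minSq p i := by
  conv_lhs => rw [← hadamardLift_hadamardDiff_minSq p]
  exact hadamardObjective_hadamardLift h μ p _ (minSq_nonneg p)

lemma isLocalMin_hadamardObjective {h : EuclideanSpace ℝ ι → ℝ} {μ : ℝ} (hμ : 0 ≤ μ)
    {p : EuclideanSpace ℝ ι × EuclideanSpace ℝ ι}
    (hf : IsLocalMin (l1Objective h μ) (hadamardDiff p)) (hp : ∑ i, minSq p i = 0) :
    IsLocalMin (hadamardObjective h μ) p := by
  filter_upwards [hf.comp_continuous continuous_hadamardDiff.continuousAt] with q hq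
  have hexcess : 0 ≤ 2 * μ * ∑ i, minSq q i :=
    mul_nonneg (by positivity) (Finset.sum_nonneg fun i _ => minSq_nonneg q i)
  rw [hadamardObjective_eq_l1Objective_add h μ p, hadamardObjective_eq_l1Objective_add h μ q, hp,
    mul_zero, add_zero]
  exact hq.trans (le_add_of_nonneg_right hexcess)

lemma IsLocalMin.l1Objective_hadamardDiff {h : EuclideanSpace ℝ ι → ℝ} {μ : ℝ}
    {p : EuclideanSpace ℝ ι × EuclideanSpace ℝ ι} (hF : IsLocalMin (hadamardObjective h μ) p) :
    IsLocalMin (l1Objective h μ) (hadamardDiff p) := by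
  have hlift : Continuous fun x => hadamardLift p x (minSq p) :=
    (continuous_hadamardLift p).comp (continuous_id.prodMk continuous_const)
  rw [← hadamardLift_hadamardDiff_minSq p] at hF
  filter_upwards [hF.comp_continuous (g := fun x => hadamardLift p x (minSq p))
    hlift.continuousAt] with x hx
  simpa only [Function.comp_apply, hadamardObjective_hadamardLift h μ p _ (minSq_nonneg p),
    add_le_add_iff_right] using hx

lemma IsLocalMin.sum_minSq_eq_zero {h : EuclideanSpace ℝ ι → ℝ} {μ : ℝ} (hμ : μ ≠ 0)
    {p : EuclideanSpace ℝ ι × EuclideanSpace ℝ ι} (hF : IsLocalMin (hadamardObjective h μ) p) :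
    ∑ i, minSq p i = 0 := by
  set M := ∑ i, minSq p i
  let c : ℝ → EuclideanSpace ℝ ι × EuclideanSpace ℝ ι := fun s =>
    hadamardLift p (hadamardDiff p) (s • minSq p)
  have hc : Continuous c :=
    (continuous_hadamardLift p).comp (continuous_const.prodMk (continuous_id.smul continuous_const))
  have hc₁ : c 1 = p := by simp only [c, one_smul, hadamardLift_hadamardDiff_minSq]
  have hmin : IsLocalMin (hadamardObjective h μ ∘ c) 1 :=
    (hc₁ ▸ hF).comp_continuous hc.continuousAt
  have haffine : hadamardObjective h μ ∘ c =ᶠ[nhds 1]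
      fun s => l1Objective h μ (hadamardDiff p) + 2 * μ * M * s := by
    filter_upwards [eventually_gt_nhds one_pos] with s hs
    rw [Function.comp_apply, hadamardObjective_hadamardLift h μ p _
      (smul_nonneg hs.le (minSq_nonneg p))]
    simp only [Pi.smul_apply, smul_eq_mul, ← Finset.mul_sum, M]
    ring
  have hslope := (hmin.congr haffine).hasDerivAt_eq_zero
    (((hasDerivAt_id (1 : ℝ)).const_mul (2 * μ * M)).const_add _)
  simpa [hμ] using hslope

end Objectives

end Hadamard

theorem stmt6 (n : ℕ)
    (h : EuclideanSpace ℝ (Fin n) → ℝ)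
    (μ : ℝ) (hμ : 0 < μ)
    (f : EuclideanSpace ℝ (Fin n) → ℝ)
    (hf : f = fun x => h x + μ * ∑ i, |x i|)
    (F : EuclideanSpace ℝ (Fin n) × EuclideanSpace ℝ (Fin n) → ℝ)
    (hF : F = fun p =>
      h (WithLp.toLp 2 (fun i => p.1 i ^ 2 - p.2 i ^ 2)) + μ * ∑ i, (p.1 i ^ 2 + p.2 i ^ 2))
    (a b : EuclideanSpace ℝ (Fin n)) :
    (IsLocalMin f (WithLp.toLp 2 (fun i => a i ^ 2 - b i ^ 2)) ∧
      ∀ i : Fin n, min (a i ^ 2) (b i ^ 2) = 0) ↔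
    IsLocalMin F (a, b) := by
  subst hf hF
  have hM : ∑ i, minSq (a, b) i = 0 ↔ ∀ i, min (a i ^ 2) (b i ^ 2) = 0 := by
    rw [Fintype.sum_eq_zero_iff_of_nonneg (minSq_nonneg _), funext_iff]
    rfl
  exact ⟨fun ⟨hf, hmin⟩ => isLocalMin_hadamardObjective hμ.le hf (hM.2 hmin),
    fun hF => ⟨hF.l1Objective_hadamardDiff, hM.1 (hF.sum_minSq_eq_zero hμ.ne')⟩⟩
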